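/- arXiv:1103.1034 — 3 statements merged into one kernel-verified Lean document; each statement's English description precedes it below -/
import Mathlib

section
/- Let f belong to W¹[−1,1] with constant M₁, and set L = (4γM₁/π)·(1 + π√2/(2γ·ln N)) and L₁ = M₁γ/(2π). Then for every z ∈ ℂ with |Re z| > 1, the remainder R*_N(f,z) = Φ(f − S_N, z) satisfies |R*_N(f,z)| ≤ √((L·ln N)² + L₁²)/N. -/
/-!
Since `f` is `M₁`-Lipschitz, on each cell `[t_k, t_{k+1}]` the interpolation error is at most
`M₁ (t - t_k)(t_{k+1} - t) · 2 / h_k ≤ M₁ h_k / 2`, so `|f - S_N| ≤ M₁γ/(2N)` on `[-1, 1]`.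
Hence it suffices that `√|z² - 1| · ∫ |dt / (√(1 - t²) (t - z))| ≤ 8` whenever `Re z > 1`
(the case `Re z < -1` follows by `t ↦ -t`). Split the integral at `0` and, when `a = |z - 1| ≤ 1`,
at `1 - a`: on `[-1, 0]` one has `|t - z| ≥ |z + 1|/2`, near `1` one has `|t - z| ≥ max (a, 1 - t)`,
and `√(1 - t²) ≥ √(1 ∓ t)`, which leaves integrals of `(1 ∓ t)^(-1/2)` and `(1 - t)^(-3/2)`.
This gives the bound `4 M₁ γ / (π N)`, below the stated one because `ln N ≥ 1`.
-/

open Real MeasureTheory Filter Topology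

lemma exists_lt_mem_Icc_add_one (t : ℕ → ℝ) {n : ℕ} (hn : 0 < n) {u : ℝ}
    (hu : u ∈ Set.Icc (t 0) (t n)) : ∃ k < n, u ∈ Set.Icc (t k) (t (k + 1)) := by
  induction n with
  | zero => omega
  | succ n ih =>
    by_cases hun : u ≤ t n
    · rcases Nat.eq_zero_or_pos n with rfl | hn0
      · exact ⟨0, Nat.zero_lt_one, hu⟩
      · obtain ⟨k, hk, huk⟩ := ih hn0 ⟨hu.1, hun⟩
        exact ⟨k, by omega, huk⟩
    · exact ⟨n, n.lt_add_one, (not_le.1 hun).le, hu.2⟩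

lemma abs_sub_linearInterp_le {f : ℝ → ℝ} {M a b u : ℝ} (hM : 0 ≤ M) (hab : a < b)
    (hu : u ∈ Set.Icc a b) (hfa : |f u - f a| ≤ M * (u - a)) (hfb : |f u - f b| ≤ M * (b - u)) :
    |f u - ((b - u) * f a + (u - a) * f b) / (b - a)| ≤ M * (b - a) / 2 := by
  have hba : 0 < b - a := sub_pos.2 hab
  have hua : 0 ≤ u - a := sub_nonneg.2 hu.1
  have hbu : 0 ≤ b - u := sub_nonneg.2 hu.2
  have hsplit : f u - ((b - u) * f a + (u - a) * f b) / (b - a)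
      = ((b - u) * (f u - f a) + (u - a) * (f u - f b)) / (b - a) := by
    field_simp
    ring
  rw [hsplit, abs_div, abs_of_pos hba, div_le_iff₀ hba]
  calc |(b - u) * (f u - f a) + (u - a) * (f u - f b)|
      ≤ (b - u) * |f u - f a| + (u - a) * |f u - f b| := by
        refine (abs_add_le _ _).trans_eq ?_
        rw [abs_mul, abs_mul, abs_of_nonneg hua, abs_of_nonneg hbu]
    _ ≤ (b - u) * (M * (u - a)) + (u - a) * (M * (b - u)) := by gcongr
    _ ≤ M * (b - a) / 2 * (b - a) := by nlinarith [mul_nonneg hM (sq_nonneg (u - a - (b - u)))]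

lemma abs_sub_linearSpline_le {N : ℕ} (hN : 0 < N) {t : ℕ → ℝ}
    (hmono : ∀ k < N, t k < t (k + 1)) {h : ℝ} (hstep : ∀ k < N, t (k + 1) - t k ≤ h)
    {f S : ℝ → ℝ} {M : ℝ} (hM : 0 ≤ M)
    (hf : ∀ u ∈ Set.Icc (t 0) (t N), ∀ v ∈ Set.Icc (t 0) (t N), |f u - f v| ≤ M * |u - v|)
    (hS : ∀ k < N, ∀ u ∈ Set.Icc (t k) (t (k + 1)),
      S u = ((t (k + 1) - u) * f (t k) + (u - t k) * f (t (k + 1))) / (t (k + 1) - t k))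
    {u : ℝ} (hu : u ∈ Set.Icc (t 0) (t N)) : |f u - S u| ≤ M * h / 2 := by
  obtain ⟨k, hk, huk⟩ := exists_lt_mem_Icc_add_one t hN hu
  have ht : MonotoneOn t (Set.Iic N) :=
    monotoneOn_of_le_add_one Set.ordConnected_Iic fun j _ _ hj => (hmono j hj).le
  have hsub : Set.Icc (t k) (t (k + 1)) ⊆ Set.Icc (t 0) (t N) :=
    Set.Icc_subset_Icc (ht (Set.mem_Iic.2 (Nat.zero_le N)) (Set.mem_Iic.2 hk.le) (Nat.zero_le k))
      (ht (Set.mem_Iic.2 hk) (Set.mem_Iic.2 le_rfl) hk)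
  have hfa : |f u - f (t k)| ≤ M * (u - t k) := by
    simpa [abs_of_nonneg (sub_nonneg.2 huk.1)] using
      hf u hu (t k) (hsub (Set.left_mem_Icc.2 (hmono k hk).le))
  have hfb : |f u - f (t (k + 1))| ≤ M * (t (k + 1) - u) := by
    simpa [abs_of_nonpos (sub_nonpos.2 huk.2)] using
      hf u hu (t (k + 1)) (hsub (Set.right_mem_Icc.2 (hmono k hk).le))
  rw [hS k hk u huk]
  calc _ ≤ M * (t (k + 1) - t k) / 2 := abs_sub_linearInterp_le hM (hmono k hk) huk hfa hfb
    _ ≤ M * h / 2 := by gcongr; exact hstep k hk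

lemma rpow_neg_half_eq_inv_sqrt {x : ℝ} (hx : 0 ≤ x) : x ^ (-(1 / 2) : ℝ) = (√x)⁻¹ := by
  rw [rpow_neg hx, sqrt_eq_rpow]

lemma integral_one_sub_rpow_neg_half (s : ℝ) :
    ∫ u in s..1, (1 - u) ^ (-(1 / 2) : ℝ) = 2 * √(1 - s) := by
  rw [intervalIntegral.integral_comp_sub_left (fun x : ℝ => x ^ (-(1 / 2) : ℝ)),
    integral_rpow (Or.inl (by norm_num)), sub_self, zero_rpow (by norm_num), sqrt_eq_rpow]
  norm_num
  ring

lemma integral_one_add_rpow_neg_half : ∫ u in (-1 : ℝ)..0, (1 + u) ^ (-(1 / 2) : ℝ) = 2 := by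
  rw [intervalIntegral.integral_comp_add_left (fun x : ℝ => x ^ (-(1 / 2) : ℝ)),
    integral_rpow (Or.inl (by norm_num))]
  norm_num

lemma integral_one_sub_rpow_neg_three_halves {d : ℝ} (hd : 0 < d) (hd1 : d ≤ 1) :
    ∫ u in (0 : ℝ)..1 - d, (1 - u) ^ (-(3 / 2) : ℝ) = 2 / √d - 2 := by
  have h0 : (0 : ℝ) ∉ Set.uIcc d 1 := by simp [Set.uIcc_of_le hd1, hd.not_ge]
  rw [intervalIntegral.integral_comp_sub_left (fun x : ℝ => x ^ (-(3 / 2) : ℝ)), sub_sub_cancel,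
    sub_zero, integral_rpow (Or.inr ⟨by norm_num, h0⟩), one_rpow,
    show (-(3 / 2) + 1 : ℝ) = -(1 / 2) by norm_num, rpow_neg_half_eq_inv_sqrt hd.le]
  field_simp
  ring

lemma intervalIntegrable_one_sub_rpow_neg_half (a b : ℝ) :
    IntervalIntegrable (fun u : ℝ => (1 - u) ^ (-(1 / 2) : ℝ)) volume a b := by
  simpa using (intervalIntegral.intervalIntegrable_rpow' (a := 1 - a) (b := 1 - b)
    (by norm_num : (-1 : ℝ) < -(1 / 2))).comp_sub_left 1

lemma intervalIntegrable_one_add_rpow_neg_half (a b : ℝ) :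
    IntervalIntegrable (fun u : ℝ => (1 + u) ^ (-(1 / 2) : ℝ)) volume a b := by
  simpa using (intervalIntegral.intervalIntegrable_rpow' (a := 1 + a) (b := 1 + b)
    (by norm_num : (-1 : ℝ) < -(1 / 2))).comp_add_left 1

lemma intervalIntegrable_one_sub_rpow_of_lt_one {a b : ℝ} (hab : a ≤ b) (hb : b < 1) (r : ℝ) :
    IntervalIntegrable (fun u : ℝ => (1 - u) ^ r) volume a b :=
  ContinuousOn.intervalIntegrable <| (continuousOn_const.sub continuousOn_id).rpow_const
    fun u hu => Or.inl <| sub_ne_zero.2 <| by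
      rw [Set.uIcc_of_le hab] at hu
      exact (hu.2.trans_lt hb).ne'

lemma norm_integral_le_norm_add_norm {E : Type*} [NormedAddCommGroup E] [NormedSpace ℝ E]
    {F : ℝ → E} {a b c : ℝ} (hab : a ≤ b) (hbc : b ≤ c) (hF : IntervalIntegrable F volume a c) :
    ‖∫ u in a..c, F u‖ ≤ ‖∫ u in a..b, F u‖ + ‖∫ u in b..c, F u‖ := by
  rw [← intervalIntegral.integral_add_adjacent_intervals
    (hF.mono_set (Set.uIcc_subset_uIcc_left (Set.mem_uIcc_of_le hab hbc)))
    (hF.mono_set (Set.uIcc_subset_uIcc_right (Set.mem_uIcc_of_le hab hbc)))]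
  exact norm_add_le _ _

lemma sqrt_mul_mul_four_div_add_four_div_sqrt_sub_two_le_eight {a b : ℝ} (ha : 0 < a)
    (ha1 : a ≤ 1) (hb : 2 ≤ b) (hba : b ≤ a + 2) :
    √(a * b) * (4 / b + (4 / √a - 2)) ≤ 8 := by
  obtain ⟨p, hp, rfl⟩ : ∃ p, 0 < p ∧ p ^ 2 = a := ⟨√a, sqrt_pos.2 ha, sq_sqrt ha.le⟩
  obtain ⟨q, hq, rfl⟩ : ∃ q, 0 < q ∧ q ^ 2 = b :=
    ⟨√b, sqrt_pos.2 (by linarith), sq_sqrt (by linarith)⟩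
  rw [sqrt_mul (sq_nonneg p), sqrt_sq hp.le, sqrt_sq hq.le]
  have hexpand : p * q * (4 / q ^ 2 + (4 / p - 2)) = 4 * p / q + 4 * q - 2 * p * q := by
    field_simp
    ring
  have h1 : 4 * p / q ≤ 2 * p * q := by
    rw [div_le_iff₀ hq]
    nlinarith
  have h2 : q ≤ 2 := by nlinarith
  linarith

lemma sqrt_mul_mul_four_div_add_two_div_le_eight {a b : ℝ} (ha1 : 1 < a) (hab : a ≤ b)
    (hba : b ≤ a + 2) : √(a * b) * (4 / b + 2 / a) ≤ 8 := by
  obtain ⟨p, hp, rfl⟩ : ∃ p, 0 < p ∧ p ^ 2 = a :=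
    ⟨√a, sqrt_pos.2 (by linarith), sq_sqrt (by linarith)⟩
  obtain ⟨q, hq, rfl⟩ : ∃ q, 0 < q ∧ q ^ 2 = b :=
    ⟨√b, sqrt_pos.2 (by linarith), sq_sqrt (by linarith)⟩
  rw [sqrt_mul (sq_nonneg p), sqrt_sq hp.le, sqrt_sq hq.le]
  have hpq : p ≤ q := by nlinarith
  have hqp : q ≤ 2 * p := by nlinarith
  have hexpand : p * q * (4 / q ^ 2 + 2 / p ^ 2) = 4 * p / q + 2 * q / p := by
    field_simp
  have h1 : 4 * p / q ≤ 4 := by rw [div_le_iff₀ hq]; linarith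
  have h2 : 2 * q / p ≤ 4 := by rw [div_le_iff₀ hp]; linarith
  linarith

/-- The integrand of `Φ(g, z) = -(√(z² - 1) / π) ∫₋₁¹ g t / (√(1 - t²) (t - z)) dt`. -/
noncomputable def chebyshevCauchyIntegrand (g : ℝ → ℂ) (z : ℂ) (u : ℝ) : ℂ :=
  g u / ((Real.sqrt (1 - u ^ 2) : ℂ) * ((u : ℂ) - z))

section Kernel

variable {g : ℝ → ℂ} {z : ℂ} {c : ℝ}

lemma norm_chebyshevCauchyIntegrand_le {u A B : ℝ} (hg : ‖g u‖ ≤ c) (hA : 0 < A) (hB : 0 < B)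
    (hAu : A ≤ √(1 - u ^ 2)) (hBu : B ≤ ‖(u : ℂ) - z‖) :
    ‖chebyshevCauchyIntegrand g z u‖ ≤ c / (A * B) := by
  rw [chebyshevCauchyIntegrand, norm_div, norm_mul, Complex.norm_real,
    norm_of_nonneg (sqrt_nonneg _)]
  exact div_le_div₀ ((norm_nonneg _).trans hg) hg (by positivity)
    (mul_le_mul hAu hBu hB.le (sqrt_nonneg _))

lemma chebyshevCauchyIntegrand_one : chebyshevCauchyIntegrand g z 1 = 0 := by
  simp [chebyshevCauchyIntegrand]

lemma re_sub_le_norm_ofReal_sub (z : ℂ) (u : ℝ) : z.re - u ≤ ‖(u : ℂ) - z‖ := by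
  simpa [norm_sub_rev] using Complex.re_le_norm (z - u)

lemma norm_sub_one_pos (hz : 1 < z.re) : 0 < ‖z - 1‖ :=
  norm_pos_iff.2 fun h => by simp [sub_eq_zero.1 h] at hz

lemma two_le_norm_add_one (hz : 1 ≤ z.re) : 2 ≤ ‖z + 1‖ := by
  have := Complex.re_le_norm (z + 1)
  simp only [Complex.add_re, Complex.one_re] at this
  linarith

lemma norm_sub_one_le_norm_ofReal_sub (hz : 1 ≤ z.re) {u : ℝ} (hu : u ≤ 1) :
    ‖z - 1‖ ≤ ‖(u : ℂ) - z‖ := by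
  rw [← sq_le_sq₀ (norm_nonneg _) (norm_nonneg _), Complex.sq_norm, Complex.sq_norm,
    Complex.normSq_apply, Complex.normSq_apply]
  simp only [Complex.sub_re, Complex.sub_im, Complex.one_re, Complex.one_im, Complex.ofReal_re,
    Complex.ofReal_im]
  nlinarith

lemma norm_add_one_le_two_mul_norm_ofReal_sub (hz : 1 ≤ z.re) {u : ℝ}
    (hu : u ∈ Set.Icc (-1 : ℝ) 0) : ‖z + 1‖ ≤ 2 * ‖(u : ℂ) - z‖ := by
  have hsplit : z + 1 = -((u : ℂ) - z) + ((u + 1 : ℝ) : ℂ) := by push_cast; ring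
  have hu1 : ‖((u + 1 : ℝ) : ℂ)‖ ≤ 1 := by
    rw [Complex.norm_real, norm_of_nonneg (by linarith [hu.1])]
    linarith [hu.2]
  have := re_sub_le_norm_ofReal_sub z u
  calc ‖z + 1‖ ≤ ‖(u : ℂ) - z‖ + 1 := by
        rw [hsplit, ← norm_neg ((u : ℂ) - z)]
        exact (norm_add_le _ _).trans (by gcongr)
    _ ≤ 2 * ‖(u : ℂ) - z‖ := by linarith [hu.2]

lemma norm_integral_chebyshevCauchyIntegrand_neg_one_to_zero_le
    (hg : ∀ u ∈ Set.Icc (-1 : ℝ) 1, ‖g u‖ ≤ c) (hz : 1 ≤ z.re) :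
    ‖∫ u in (-1 : ℝ)..0, chebyshevCauchyIntegrand g z u‖ ≤ c * (4 / ‖z + 1‖) := by
  have hb := two_le_norm_add_one hz
  have hbound : ∀ u ∈ Set.Ioc (-1 : ℝ) 0,
      ‖chebyshevCauchyIntegrand g z u‖ ≤ c * (2 / ‖z + 1‖) * (1 + u) ^ (-(1 / 2) : ℝ) := by
    intro u hu
    have h1u : 0 < 1 + u := by linarith [hu.1]
    refine (norm_chebyshevCauchyIntegrand_le (hg u ⟨hu.1.le, by linarith [hu.2]⟩)
      (sqrt_pos.2 h1u) (by linarith : 0 < ‖z + 1‖ / 2)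
      (sqrt_le_sqrt (by nlinarith [hu.1, hu.2]))
      (by linarith [norm_add_one_le_two_mul_norm_ofReal_sub hz ⟨hu.1.le, hu.2⟩])).trans_eq ?_
    rw [rpow_neg_half_eq_inv_sqrt h1u.le]
    field_simp
  calc _ ≤ ∫ u in (-1 : ℝ)..0, c * (2 / ‖z + 1‖) * (1 + u) ^ (-(1 / 2) : ℝ) :=
        intervalIntegral.norm_integral_le_of_norm_le (by norm_num) (ae_of_all _ hbound)
          ((intervalIntegrable_one_add_rpow_neg_half _ _).const_mul _)
    _ = c * (4 / ‖z + 1‖) := by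
        rw [intervalIntegral.integral_const_mul, integral_one_add_rpow_neg_half]
        ring

lemma norm_integral_chebyshevCauchyIntegrand_to_one_le
    (hg : ∀ u ∈ Set.Icc (-1 : ℝ) 1, ‖g u‖ ≤ c) (hz : 1 < z.re)
    {s : ℝ} (hs : s ∈ Set.Icc (0 : ℝ) 1) :
    ‖∫ u in s..1, chebyshevCauchyIntegrand g z u‖ ≤ c * (2 * √(1 - s) / ‖z - 1‖) := by
  have hbound : ∀ u ∈ Set.Ioc s 1,
      ‖chebyshevCauchyIntegrand g z u‖ ≤ c / ‖z - 1‖ * (1 - u) ^ (-(1 / 2) : ℝ) := by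
    intro u hu
    rcases hu.2.eq_or_lt with rfl | hu1
    · simp [chebyshevCauchyIntegrand_one]
    have h1u : 0 < 1 - u := sub_pos.2 hu1
    refine (norm_chebyshevCauchyIntegrand_le (hg u ⟨by linarith [hs.1, hu.1], hu.2⟩)
      (sqrt_pos.2 h1u) (norm_sub_one_pos hz) (sqrt_le_sqrt (by nlinarith [hs.1, hu.1]))
      (norm_sub_one_le_norm_ofReal_sub hz.le hu.2)).trans_eq ?_
    rw [rpow_neg_half_eq_inv_sqrt h1u.le]
    field_simp
  calc _ ≤ ∫ u in s..1, c / ‖z - 1‖ * (1 - u) ^ (-(1 / 2) : ℝ) :=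
        intervalIntegral.norm_integral_le_of_norm_le hs.2 (ae_of_all _ hbound)
          ((intervalIntegrable_one_sub_rpow_neg_half _ _).const_mul _)
    _ = c * (2 * √(1 - s) / ‖z - 1‖) := by
        rw [intervalIntegral.integral_const_mul, integral_one_sub_rpow_neg_half]
        ring

lemma norm_integral_chebyshevCauchyIntegrand_zero_to_one_sub_le
    (hg : ∀ u ∈ Set.Icc (-1 : ℝ) 1, ‖g u‖ ≤ c) (hz : 1 < z.re)
    (ha1 : ‖z - 1‖ ≤ 1) :
    ‖∫ u in (0 : ℝ)..1 - ‖z - 1‖, chebyshevCauchyIntegrand g z u‖ ≤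
      c * (2 / √‖z - 1‖ - 2) := by
  have hbound : ∀ u ∈ Set.Ioc (0 : ℝ) (1 - ‖z - 1‖),
      ‖chebyshevCauchyIntegrand g z u‖ ≤ c * (1 - u) ^ (-(3 / 2) : ℝ) := by
    intro u hu
    have h1u : 0 < 1 - u := by linarith [hu.2, norm_sub_one_pos hz]
    refine (norm_chebyshevCauchyIntegrand_le (hg u ⟨by linarith [hu.1], by linarith [hu.2]⟩)
      (sqrt_pos.2 h1u) h1u (sqrt_le_sqrt (by nlinarith [hu.1]))
      (by linarith [re_sub_le_norm_ofReal_sub z u])).trans_eq ?_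
    rw [show (-(3 / 2) : ℝ) = -(1 / 2) + -1 by norm_num, rpow_add h1u,
      rpow_neg_half_eq_inv_sqrt h1u.le, rpow_neg_one]
    field_simp
  calc _ ≤ ∫ u in (0 : ℝ)..1 - ‖z - 1‖, c * (1 - u) ^ (-(3 / 2) : ℝ) :=
        intervalIntegral.norm_integral_le_of_norm_le (by linarith) (ae_of_all _ hbound)
          ((intervalIntegrable_one_sub_rpow_of_lt_one (by linarith)
            (by linarith [norm_sub_one_pos hz]) _).const_mul _)
    _ = c * (2 / √‖z - 1‖ - 2) := by
        rw [intervalIntegral.integral_const_mul,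
          integral_one_sub_rpow_neg_three_halves (norm_sub_one_pos hz) ha1]

lemma norm_integral_chebyshevCauchyIntegrand_zero_to_one_le_of_le_one
    (hg : ∀ u ∈ Set.Icc (-1 : ℝ) 1, ‖g u‖ ≤ c) (hz : 1 < z.re)
    (hint : IntervalIntegrable (chebyshevCauchyIntegrand g z) volume 0 1) (ha1 : ‖z - 1‖ ≤ 1) :
    ‖∫ u in (0 : ℝ)..1, chebyshevCauchyIntegrand g z u‖ ≤ c * (4 / √‖z - 1‖ - 2) := by
  have hfar := norm_integral_chebyshevCauchyIntegrand_to_one_le hg hz (s := 1 - ‖z - 1‖)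
    ⟨by linarith, by linarith [norm_sub_one_pos hz]⟩
  rw [sub_sub_cancel, mul_div_assoc, sqrt_div_self'] at hfar
  calc _ ≤ _ := norm_integral_le_norm_add_norm (b := 1 - ‖z - 1‖)
        (by linarith) (by linarith [norm_sub_one_pos hz]) hint
    _ ≤ c * (2 / √‖z - 1‖ - 2) + c * (2 * (1 / √‖z - 1‖)) :=
        add_le_add (norm_integral_chebyshevCauchyIntegrand_zero_to_one_sub_le hg hz ha1) hfar
    _ = c * (4 / √‖z - 1‖ - 2) := by ring

theorem sqrt_mul_norm_integral_chebyshevCauchyIntegrand_le_of_one_lt_re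
    (hg : ∀ u ∈ Set.Icc (-1 : ℝ) 1, ‖g u‖ ≤ c) (hz : 1 < z.re) :
    √(‖z - 1‖ * ‖z + 1‖) * ‖∫ u in (-1 : ℝ)..1, chebyshevCauchyIntegrand g z u‖ ≤ 8 * c := by
  have hc : 0 ≤ c := (norm_nonneg _).trans (hg 0 (by norm_num))
  by_cases hint : IntervalIntegrable (chebyshevCauchyIntegrand g z) volume (-1) 1
  swap
  -- a non-integrable integrand has integral `0`
  · rw [intervalIntegral.integral_undef hint, norm_zero, mul_zero]
    positivity
  set a := ‖z - 1‖
  set b := ‖z + 1‖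
  have hb : 2 ≤ b := two_le_norm_add_one hz.le
  have hab : a ≤ b := by
    have := norm_sub_one_le_norm_ofReal_sub hz.le (u := -1) (by norm_num)
    rwa [show ((-1 : ℝ) : ℂ) - z = -(z + 1) by push_cast; ring, norm_neg] at this
  have hba : b ≤ a + 2 := by
    simpa [show z - 1 + 2 = z + 1 by ring] using norm_add_le (z - 1) 2
  have hleft := norm_integral_chebyshevCauchyIntegrand_neg_one_to_zero_le hg hz.le
  have hsplit := norm_integral_le_norm_add_norm (by norm_num : (-1 : ℝ) ≤ 0) zero_le_one hint
  rcases le_or_gt a 1 with ha1 | ha1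
  · have hright := norm_integral_chebyshevCauchyIntegrand_zero_to_one_le_of_le_one hg hz
      (hint.mono_set (Set.uIcc_subset_uIcc_right (by norm_num))) ha1
    calc _ ≤ √(a * b) * (c * (4 / b) + c * (4 / √a - 2)) := by
          gcongr
          linarith
      _ = c * (√(a * b) * (4 / b + (4 / √a - 2))) := by ring
      _ ≤ c * 8 := by
          gcongr
          exact sqrt_mul_mul_four_div_add_four_div_sqrt_sub_two_le_eight
            (norm_sub_one_pos hz) ha1 hb hba
      _ = 8 * c := mul_comm _ _
  · have hright := norm_integral_chebyshevCauchyIntegrand_to_one_le hg hz (s := 0) (by simp)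
    rw [sub_zero, sqrt_one, mul_one] at hright
    calc _ ≤ √(a * b) * (c * (4 / b) + c * (2 / a)) := by
          gcongr
          linarith
      _ = c * (√(a * b) * (4 / b + 2 / a)) := by ring
      _ ≤ c * 8 := by
          gcongr
          exact sqrt_mul_mul_four_div_add_two_div_le_eight ha1 hab hba
      _ = 8 * c := mul_comm _ _

lemma integral_chebyshevCauchyIntegrand_neg (g : ℝ → ℂ) (z : ℂ) :
    ∫ u in (-1 : ℝ)..1, chebyshevCauchyIntegrand g z u =
      ∫ u in (-1 : ℝ)..1, chebyshevCauchyIntegrand (fun u => -g (-u)) (-z) u := by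
  have h := intervalIntegral.integral_comp_neg (a := (-1 : ℝ)) (b := 1)
    (chebyshevCauchyIntegrand g z)
  rw [neg_neg] at h
  rw [← h]
  refine intervalIntegral.integral_congr fun u _ => ?_
  simp only [chebyshevCauchyIntegrand, neg_sq, Complex.ofReal_neg]
  rw [show -(u : ℂ) - z = -((u : ℂ) - -z) by ring, mul_neg, div_neg, neg_div]

theorem sqrt_mul_norm_integral_chebyshevCauchyIntegrand_le
    (hg : ∀ u ∈ Set.Icc (-1 : ℝ) 1, ‖g u‖ ≤ c) (hz : 1 < |z.re|) :
    √(‖z - 1‖ * ‖z + 1‖) * ‖∫ u in (-1 : ℝ)..1, chebyshevCauchyIntegrand g z u‖ ≤ 8 * c := by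
  rcases lt_abs.1 hz with hz | hz
  · exact sqrt_mul_norm_integral_chebyshevCauchyIntegrand_le_of_one_lt_re hg hz
  · have hg' : ∀ u ∈ Set.Icc (-1 : ℝ) 1, ‖-g (-u)‖ ≤ c := fun u hu =>
      (norm_neg _).trans_le (hg _ ⟨by linarith [hu.2], by linarith [hu.1]⟩)
    have := sqrt_mul_norm_integral_chebyshevCauchyIntegrand_le_of_one_lt_re hg'
      (z := -z) (by simpa using hz)
    rwa [← integral_chebyshevCauchyIntegrand_neg, show -z - 1 = -(z + 1) by ring,
      show -z + 1 = -(z - 1) by ring, norm_neg, norm_neg, mul_comm ‖z + 1‖] at this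

end Kernel

lemma norm_mul_one_sub_one_div_sq_cpow_half {z : ℂ} (hz : z ≠ 0) :
    ‖z * (1 - 1 / z ^ 2) ^ ((1 : ℂ) / 2)‖ = √(‖z - 1‖ * ‖z + 1‖) := by
  have hfactor : z ^ 2 * (1 - 1 / z ^ 2) = (z - 1) * (z + 1) := by
    field_simp
    ring
  rw [norm_mul, show ((1 : ℂ) / 2) = ((1 / 2 : ℝ) : ℂ) by norm_num, Complex.norm_cpow_real,
    ← sqrt_eq_rpow, ← sqrt_sq (norm_nonneg z), ← sqrt_mul (sq_nonneg _), ← norm_pow, ← norm_mul,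
    hfactor, norm_mul]

lemma four_mul_div_pi_le_sqrt {N : ℕ} (hN : 3 ≤ N) {γ M : ℝ} (hγ : 0 < γ) (hM : 0 ≤ M) :
    4 * M * γ / π ≤ √(((4 * γ * M / π) * (1 + π * √2 / (2 * γ * log N)) * log N) ^ 2
      + (M * γ / (2 * π)) ^ 2) := by
  have hlog : 1 ≤ log N := by
    rw [le_log_iff_exp_le (by positivity)]
    have : (3 : ℝ) ≤ N := by exact_mod_cast hN
    linarith [exp_one_lt_d9]
  have hX : 4 * M * γ / π ≤ (4 * γ * M / π) * (1 + π * √2 / (2 * γ * log N)) * log N :=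
    calc 4 * M * γ / π = (4 * γ * M / π) * 1 * 1 := by ring
      _ ≤ _ := by
          gcongr
          exact le_add_of_nonneg_right (by positivity)
  refine (le_abs_self _).trans (abs_le_sqrt ?_)
  nlinarith [sq_nonneg (M * γ / (2 * π)), show 0 ≤ 4 * M * γ / π by positivity]

theorem quadrature_error_complex_W1_table2
    (N : ℕ) (hN : 3 ≤ N)
    (t : ℕ → ℝ) (ht0 : t 0 = -1) (htN : t N = 1)
    (hmono : ∀ k, k < N → t k < t (k + 1))
    (γ : ℝ) (hγ : 0 < γ)
    (hstep : ∀ k, k < N → t (k + 1) - t k ≤ γ / N)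
    (f S : ℝ → ℝ) (M₁ : ℝ)
    (hf : ∀ u ∈ Set.Icc (-1 : ℝ) 1, ∀ v ∈ Set.Icc (-1 : ℝ) 1,
      |f u - f v| ≤ M₁ * |u - v|)
    (hS : ∀ k, k < N → ∀ u ∈ Set.Icc (t k) (t (k + 1)),
      S u = ((t (k + 1) - u) * f (t k) + (u - t k) * f (t (k + 1))) / (t (k + 1) - t k))
    (z : ℂ) (hz : 1 < |z.re|) :
    ‖(-((z * (1 - 1 / z ^ 2) ^ ((1 : ℂ) / 2)) / (π : ℂ)) *
        ∫ u in (-1 : ℝ)..1,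
          ((f u - S u : ℝ) : ℂ) / ((Real.sqrt (1 - u ^ 2) : ℂ) * ((u : ℂ) - z)))‖ ≤
      Real.sqrt (((4 * γ * M₁ / π) * (1 + π * Real.sqrt 2 / (2 * γ * Real.log N)) * Real.log N) ^ 2 + (M₁ * γ / (2 * π)) ^ 2) / (N : ℝ) := by
  have hM : 0 ≤ M₁ := by
    have h := hf 1 (by norm_num) 0 (by norm_num)
    rw [sub_zero, abs_one, mul_one] at h
    exact (abs_nonneg _).trans h
  have hz0 : z ≠ 0 := by
    rintro rfl
    norm_num at hz
  have hspline : ∀ u ∈ Set.Icc (-1 : ℝ) 1, ‖((f u - S u : ℝ) : ℂ)‖ ≤ M₁ * (γ / N) / 2 := by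
    intro u hu
    rw [Complex.norm_real, norm_eq_abs]
    exact abs_sub_linearSpline_le (by omega) hmono hstep hM (by rwa [ht0, htN]) hS
      (by rwa [ht0, htN])
  have hkernel : √(‖z - 1‖ * ‖z + 1‖) * ‖∫ u in (-1 : ℝ)..1,
      ((f u - S u : ℝ) : ℂ) / ((Real.sqrt (1 - u ^ 2) : ℂ) * ((u : ℂ) - z))‖ ≤
      8 * (M₁ * (γ / N) / 2) :=
    sqrt_mul_norm_integral_chebyshevCauchyIntegrand_le hspline hz
  rw [norm_mul, norm_neg, norm_div, Complex.norm_real, norm_of_nonneg pi_pos.le,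
    norm_mul_one_sub_one_div_sq_cpow_half hz0, div_mul_eq_mul_div]
  calc _ ≤ 8 * (M₁ * (γ / N) / 2) / π := by gcongr
    _ = 4 * M₁ * γ / π / N := by ring
    _ ≤ _ := by gcongr; exact four_mul_div_pi_le_sqrt hN hγ hM
end

section
/- Let f belong to CC^{1,α}_Δ[−1,1] with constants K₁ and 0 < α ≤ 1, and set L = (2γ^{1+α}K₁/π)·(1 + π√2/(2γ·ln N)) and L₁ = K₁γ^{1+α}/(4π). Then for every z ∈ ℂ with |Re z| > 1, the remainder R*_N(f,z) = Φ(f − S_N, z) satisfies |R*_N(f,z)| ≤ √((L·ln N)² + L₁²)/N^{1+α}. -/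
/-!
On a cell `[a, b]`, two applications of the mean value theorem give
`f u - S u = (u - a) (b - u) (f' ξ - f' η) / (b - a)`, so `|f - S_N| ≤ K₁ (γ / N)^(1+α) / 4`.

For `|Re z| > 1` choose `c = Re z ± |Im z|` with `c² = (|Re z| + |Im z|)²`; then
`|c - u| ≤ √2 |u - z|`, and `-arcsin ((1 - c u) / (c - u)) / √(c² - 1)` is a primitive of
`1 / (√(1 - u²) |c - u|)`, whose integral over `[-1, 1]` is therefore `π / √(c² - 1)`.
Since `|z² - 1| ≤ c² - 1`, this gives `|Φ(e, z)| ≤ √2 sup |e|`, which is below the stated bound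
as soon as `ln N ≥ 1`.
-/

open Real Set MeasureTheory intervalIntegral

noncomputable def linInterp (f : ℝ → ℝ) (a b u : ℝ) : ℝ :=
  ((b - u) * f a + (u - a) * f b) / (b - a)

lemma linInterp_left (f : ℝ → ℝ) {a b : ℝ} (hab : a ≠ b) : linInterp f a b a = f a := by
  rw [linInterp, div_eq_iff (sub_ne_zero.2 hab.symm)]
  ring

lemma linInterp_right (f : ℝ → ℝ) {a b : ℝ} (hab : a ≠ b) : linInterp f a b b = f b := by
  rw [linInterp, div_eq_iff (sub_ne_zero.2 hab.symm)]
  ring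

lemma nonneg_of_abs_sub_le_mul_rpow {g : ℝ → ℝ} {K α a b : ℝ} (hab : a ≠ b)
    (h : |g a - g b| ≤ K * |a - b| ^ α) : 0 ≤ K :=
  nonneg_of_mul_nonneg_left ((abs_nonneg _).trans h)
    (rpow_pos_of_pos (abs_pos.2 (sub_ne_zero.2 hab)) α)

lemma exists_sub_linInterp_eq {f g : ℝ → ℝ} {a b u : ℝ}
    (hf : ∀ v ∈ Icc a b, HasDerivWithinAt f (g v) (Icc a b) v) (hu : u ∈ Ioo a b) :
    ∃ ξ ∈ Ioo a u, ∃ η ∈ Ioo u b,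
      f u - linInterp f a b u = (u - a) * (b - u) * (g ξ - g η) / (b - a) := by
  have hcont : ContinuousOn f (Icc a b) := fun v hv => (hf v hv).continuousWithinAt
  have hderiv : ∀ v ∈ Ioo a b, HasDerivAt f (g v) v := fun v hv =>
    (hf v (Ioo_subset_Icc_self hv)).hasDerivAt (Icc_mem_nhds hv.1 hv.2)
  obtain ⟨ξ, hξ, hξs⟩ := exists_hasDerivAt_eq_slope f g hu.1
    (hcont.mono (Icc_subset_Icc_right hu.2.le)) fun v hv => hderiv v ⟨hv.1, hv.2.trans hu.2⟩
  obtain ⟨η, hη, hηs⟩ := exists_hasDerivAt_eq_slope f g hu.2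
    (hcont.mono (Icc_subset_Icc_left hu.1.le)) fun v hv => hderiv v ⟨hu.1.trans hv.1, hv.2⟩
  refine ⟨ξ, hξ, η, hη, ?_⟩
  have hua : u - a ≠ 0 := sub_ne_zero.2 hu.1.ne'
  have hbu : b - u ≠ 0 := sub_ne_zero.2 hu.2.ne'
  have hba : b - a ≠ 0 := sub_ne_zero.2 (hu.1.trans hu.2).ne'
  rw [hξs, hηs, linInterp]
  field_simp
  ring

lemma abs_sub_linInterp_le {f g : ℝ → ℝ} {a b u h K α : ℝ} (hab : a < b) (hh : b - a ≤ h)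
    (hα : 0 ≤ α) (hf : ∀ v ∈ Icc a b, HasDerivWithinAt f (g v) (Icc a b) v)
    (hg : ∀ v ∈ Icc a b, ∀ w ∈ Icc a b, |g v - g w| ≤ K * |v - w| ^ α) (hu : u ∈ Icc a b) :
    |f u - linInterp f a b u| ≤ K * h ^ (1 + α) / 4 := by
  have hK : 0 ≤ K := nonneg_of_abs_sub_le_mul_rpow hab.ne (hg a (left_mem_Icc.2 hab.le) b
    (right_mem_Icc.2 hab.le))
  have hba : 0 < b - a := sub_pos.2 hab
  suffices |f u - linInterp f a b u| ≤ K * (b - a) ^ (1 + α) / 4 from this.trans (by gcongr)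
  rcases hu.1.eq_or_lt with rfl | hau
  · simp only [linInterp_left f hab.ne, sub_self, abs_zero]
    positivity
  rcases hu.2.eq_or_lt with rfl | hub
  · simp only [linInterp_right f hab.ne, sub_self, abs_zero]
    positivity
  obtain ⟨ξ, hξ, η, hη, heq⟩ := exists_sub_linInterp_eq hf ⟨hau, hub⟩
  have hgap : |g ξ - g η| ≤ K * (b - a) ^ α := by
    refine (hg ξ ⟨hξ.1.le, (hξ.2.trans hub).le⟩ η ⟨(hau.trans hη.1).le, hη.2.le⟩).trans ?_
    gcongr
    exact abs_sub_le_iff.2 ⟨by linarith [hξ.2, hη.1], by linarith [hξ.1, hη.2]⟩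
  have hprod : (u - a) * (b - u) ≤ (b - a) ^ 2 / 4 := by
    nlinarith [sq_nonneg (u - a - (b - u))]
  calc |f u - linInterp f a b u| = (u - a) * (b - u) * |g ξ - g η| / (b - a) := by
        rw [heq, abs_div, abs_mul, abs_of_pos (mul_pos (sub_pos.2 hau) (sub_pos.2 hub)),
          abs_of_pos hba]
    _ ≤ (b - a) ^ 2 / 4 * (K * (b - a) ^ α) / (b - a) := by gcongr
    _ = K * (b - a) ^ (1 + α) / 4 := by
        rw [rpow_add hba, rpow_one]
        field_simp

lemma exists_mem_Icc_succ_of_mem_Icc {X : Type*} [LinearOrder X] {N : ℕ} {t : ℕ → X}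
    (hN : 0 < N) (h01 : t 0 ≤ t 1) {u : X} (hu : u ∈ Icc (t 0) (t N)) :
    ∃ k < N, u ∈ Icc (t k) (t (k + 1)) := by
  rcases hu.1.eq_or_lt with rfl | h0u
  · exact ⟨0, hN, le_rfl, h01⟩
  obtain ⟨k, hk, huk⟩ := mem_iUnion₂.1 (Ioc_subset_biUnion_Ioc N t ⟨h0u, hu.2⟩)
  exact ⟨k, Finset.mem_range.1 hk, Ioc_subset_Icc_self huk⟩

lemma abs_sub_spline_le {N : ℕ} (hN : 0 < N) {t : ℕ → ℝ} (hmono : ∀ k < N, t k < t (k + 1))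
    {h K α : ℝ} (hα : 0 ≤ α) (hstep : ∀ k < N, t (k + 1) - t k ≤ h) {f S : ℝ → ℝ}
    (hf : ∀ k < N, ∃ g : ℝ → ℝ,
      (∀ u ∈ Icc (t k) (t (k + 1)), HasDerivWithinAt f (g u) (Icc (t k) (t (k + 1))) u) ∧
      (∀ u ∈ Icc (t k) (t (k + 1)), ∀ v ∈ Icc (t k) (t (k + 1)), |g u - g v| ≤ K * |u - v| ^ α))
    (hS : ∀ k < N, ∀ u ∈ Icc (t k) (t (k + 1)), S u = linInterp f (t k) (t (k + 1)) u)
    {u : ℝ} (hu : u ∈ Icc (t 0) (t N)) :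
    |f u - S u| ≤ K * h ^ (1 + α) / 4 := by
  obtain ⟨k, hk, huk⟩ := exists_mem_Icc_succ_of_mem_Icc hN (hmono 0 hN).le hu
  obtain ⟨g, hfg, hg⟩ := hf k hk
  rw [hS k hk u huk]
  exact abs_sub_linInterp_le (hmono k hk) (hstep k hk) hα hfg hg huk

lemma sub_ne_zero_of_one_lt_abs_of_abs_le_one {c u : ℝ} (hc : 1 < |c|) (hu : |u| ≤ 1) :
    c - u ≠ 0 := by
  rw [sub_ne_zero]
  rintro rfl
  linarith

noncomputable def chebyshevPrimitive (c v : ℝ) : ℝ :=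
  -arcsin ((1 - c * v) / (c - v)) / √(c ^ 2 - 1)

lemma continuousOn_chebyshevPrimitive {c : ℝ} (hc : 1 < |c|) :
    ContinuousOn (chebyshevPrimitive c) (Icc (-1) 1) :=
  ((continuous_arcsin.comp_continuousOn
    ((by fun_prop : Continuous fun v => 1 - c * v).continuousOn.div
      (by fun_prop : Continuous fun v => c - v).continuousOn
      fun _ hv => sub_ne_zero_of_one_lt_abs_of_abs_le_one hc (abs_le.2 hv))).neg).div_const _

lemma hasDerivAt_chebyshevPrimitive {c u : ℝ} (hc : 1 < |c|) (hu : u ∈ Ioo (-1 : ℝ) 1) :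
    HasDerivAt (chebyshevPrimitive c) (1 / (√(1 - u ^ 2) * |c - u|)) u := by
  have hcu : c - u ≠ 0 := sub_ne_zero_of_one_lt_abs_of_abs_le_one hc (abs_le.2 ⟨hu.1.le, hu.2.le⟩)
  have hc2 : 0 < c ^ 2 - 1 := by rw [sub_pos, one_lt_sq_iff_one_lt_abs]; exact hc
  have hu2 : 0 < 1 - u ^ 2 := by nlinarith [hu.1, hu.2]
  have hr : 1 - ((1 - c * u) / (c - u)) ^ 2 = (c ^ 2 - 1) * (1 - u ^ 2) / (c - u) ^ 2 := by
    field_simp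
    ring
  have hr0 : 0 < 1 - ((1 - c * u) / (c - u)) ^ 2 := by rw [hr]; positivity
  have hquot : HasDerivAt (fun v => (1 - c * v) / (c - v)) ((1 - c ^ 2) / (c - u) ^ 2) u := by
    have hnum : HasDerivAt (fun v => 1 - c * v) (-c) u := by
      simpa using ((hasDerivAt_id u).const_mul c).const_sub 1
    have hden : HasDerivAt (fun v => c - v) (-1) u := by
      simpa using (hasDerivAt_id u).const_sub c
    exact (hnum.fun_div hden hcu).congr_deriv (by ring)
  have harcsin := hasDerivAt_arcsin (x := (1 - c * u) / (c - u))
    (by rintro h; rw [h] at hr0; norm_num at hr0) (by rintro h; rw [h] at hr0; norm_num at hr0)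
  refine ((harcsin.comp u hquot).neg.div_const √(c ^ 2 - 1)).congr_deriv ?_
  rw [hr, sqrt_div' _ (sq_nonneg _), sqrt_mul hc2.le, sqrt_sq_eq_abs]
  have hs : √(c ^ 2 - 1) ^ 2 = c ^ 2 - 1 := sq_sqrt hc2.le
  have habs : |c - u| ^ 2 = (c - u) ^ 2 := sq_abs _
  have : 0 < √(1 - u ^ 2) := sqrt_pos.2 hu2
  have : 0 < √(c ^ 2 - 1) := sqrt_pos.2 hc2
  have : 0 < |c - u| := abs_pos.2 hcu
  field_simp
  rw [hs, ← habs]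
  ring

lemma intervalIntegrable_one_div_sqrt_one_sub_sq_mul_abs_sub {c : ℝ} (hc : 1 < |c|) :
    IntervalIntegrable (fun u => 1 / (√(1 - u ^ 2) * |c - u|)) volume (-1) 1 :=
  (intervalIntegrable_iff_integrableOn_Ioc_of_le (by norm_num)).2 <|
    integrableOn_deriv_of_nonneg (continuousOn_chebyshevPrimitive hc)
      (fun _ hu => hasDerivAt_chebyshevPrimitive hc hu) fun _ _ => by positivity

lemma integral_one_div_sqrt_one_sub_sq_mul_abs_sub {c : ℝ} (hc : 1 < |c|) :
    ∫ u in (-1 : ℝ)..1, 1 / (√(1 - u ^ 2) * |c - u|) = π / √(c ^ 2 - 1) := by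
  have hc1 : c - 1 ≠ 0 := sub_ne_zero_of_one_lt_abs_of_abs_le_one hc (by norm_num)
  have hc2 : c - -1 ≠ 0 := sub_ne_zero_of_one_lt_abs_of_abs_le_one hc (by norm_num)
  rw [integral_eq_sub_of_hasDerivAt_of_le (by norm_num) (continuousOn_chebyshevPrimitive hc)
    (fun _ hu => hasDerivAt_chebyshevPrimitive hc hu)
    (intervalIntegrable_one_div_sqrt_one_sub_sq_mul_abs_sub hc)]
  have h1 : (1 - c * 1) / (c - 1) = -1 := by rw [div_eq_iff hc1]; ring
  have h2 : (1 - c * -1) / (c - -1) = 1 := by rw [div_eq_iff hc2]; ring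
  rw [chebyshevPrimitive, chebyshevPrimitive, h1, h2, arcsin_neg_one, arcsin_one]
  ring

lemma norm_sq_sub_one_le {z : ℂ} (hz : 1 ≤ |z.re|) :
    ‖z ^ 2 - 1‖ ≤ (|z.re| + |z.im|) ^ 2 - 1 := by
  have hre : (z ^ 2 - 1).re = z.re ^ 2 - z.im ^ 2 - 1 := by simp [sq]
  have him : (z ^ 2 - 1).im = 2 * z.re * z.im := by simp [sq]; ring
  have hx : 1 ≤ z.re ^ 2 := by nlinarith [sq_abs z.re]
  have hreal : |z.re ^ 2 - z.im ^ 2 - 1| ≤ z.re ^ 2 - 1 + z.im ^ 2 :=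
    abs_le.2 ⟨by nlinarith [sq_nonneg z.im], by nlinarith [sq_nonneg z.im]⟩
  calc ‖z ^ 2 - 1‖ ≤ |(z ^ 2 - 1).re| + |(z ^ 2 - 1).im| := Complex.norm_le_abs_re_add_abs_im _
    _ ≤ (|z.re| + |z.im|) ^ 2 - 1 := by
        rw [hre, him, abs_mul, abs_mul, abs_two]
        nlinarith [sq_abs z.re, sq_abs z.im]

lemma norm_mul_cpow_one_half {z : ℂ} (hz : z ≠ 0) :
    ‖z * (1 - 1 / z ^ 2) ^ ((1 : ℂ) / 2)‖ = √‖z ^ 2 - 1‖ := by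
  have hsq : ‖z‖ ^ 2 * ‖1 - 1 / z ^ 2‖ = ‖z ^ 2 - 1‖ := by
    rw [← norm_pow, ← norm_mul]
    congr 1
    field_simp
  rw [norm_mul, show (1 : ℂ) / 2 = ((1 / 2 : ℝ) : ℂ) by norm_num, Complex.norm_cpow_real, ← hsq,
    sqrt_mul (sq_nonneg _), sqrt_sq (norm_nonneg _), sqrt_eq_rpow]

lemma exists_sq_eq_and_abs_sub_le_sqrt_two_mul_norm (z : ℂ) :
    ∃ c : ℝ, c ^ 2 = (|z.re| + |z.im|) ^ 2 ∧ ∀ u : ℝ, |c - u| ≤ √2 * ‖(u : ℂ) - z‖ := by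
  obtain ⟨s, hs, hc⟩ : ∃ s : ℝ, s ^ 2 = 1 ∧ (z.re + s * |z.im|) ^ 2 = (|z.re| + |z.im|) ^ 2 := by
    rcases le_total 0 z.re with h | h
    · exact ⟨1, by norm_num, by rw [abs_of_nonneg h]; ring⟩
    · exact ⟨-1, by norm_num, by rw [abs_of_nonpos h]; ring⟩
  refine ⟨z.re + s * |z.im|, hc, fun u => ?_⟩
  have hnorm : ‖(u : ℂ) - z‖ ^ 2 = (u - z.re) ^ 2 + z.im ^ 2 := by
    rw [Complex.sq_norm, Complex.normSq_apply]
    simp only [Complex.sub_re, Complex.ofReal_re, Complex.sub_im, Complex.ofReal_im]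
    ring
  have hsy : (s * |z.im|) ^ 2 = z.im ^ 2 := by rw [mul_pow, hs, one_mul, sq_abs]
  rw [← sqrt_sq (norm_nonneg ((u : ℂ) - z)), ← sqrt_mul zero_le_two, hnorm]
  exact abs_le_sqrt (by nlinarith [sq_nonneg (z.re - u - s * |z.im|)])

/-- The transform `Φ(g, z)`; `z (1 - 1 / z²) ^ (1 / 2)` is the branch of `√(z² - 1)`. -/
noncomputable def chebyshevCauchyTransform (g : ℝ → ℝ) (z : ℂ) : ℂ :=
  -((z * (1 - 1 / z ^ 2) ^ ((1 : ℂ) / 2)) / (π : ℂ)) *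
    ∫ u in (-1 : ℝ)..1, ((g u : ℝ) : ℂ) / ((√(1 - u ^ 2) : ℂ) * ((u : ℂ) - z))

lemma norm_div_sqrt_one_sub_sq_mul_sub_le {z : ℂ} {c u e E : ℝ} (he : |e| ≤ E)
    (hcu : 0 < |c - u|) (hcz : |c - u| ≤ √2 * ‖(u : ℂ) - z‖) :
    ‖(e : ℂ) / ((√(1 - u ^ 2) : ℂ) * ((u : ℂ) - z))‖ ≤
      √2 * E * (1 / (√(1 - u ^ 2) * |c - u|)) := by
  have hz : 0 < ‖(u : ℂ) - z‖ := by
    by_contra! h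
    nlinarith [norm_nonneg ((u : ℂ) - z), sqrt_nonneg 2]
  rw [norm_div, norm_mul, Complex.norm_real, Complex.norm_real, norm_of_nonneg (sqrt_nonneg _),
    Real.norm_eq_abs, mul_one_div, div_mul_eq_div_div_swap, div_mul_eq_div_div_swap]
  refine div_le_div_of_nonneg_right ?_ (sqrt_nonneg _)
  rw [div_le_div_iff₀ hz hcu]
  calc |e| * |c - u| ≤ E * (√2 * ‖(u : ℂ) - z‖) := by gcongr; exact (abs_nonneg e).trans he
    _ = √2 * E * ‖(u : ℂ) - z‖ := by ring

theorem norm_chebyshevCauchyTransform_le {e : ℝ → ℝ} {E : ℝ}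
    (he : ∀ u ∈ Icc (-1 : ℝ) 1, |e u| ≤ E) {z : ℂ} (hz : 1 < |z.re|) :
    ‖chebyshevCauchyTransform e z‖ ≤ √2 * E := by
  obtain ⟨c, hc2, hcz⟩ := exists_sq_eq_and_abs_sub_le_sqrt_two_mul_norm z
  have hc : 1 < |c| := by
    have h := (sq_eq_sq_iff_abs_eq_abs _ _).1 hc2
    rw [abs_of_nonneg (by positivity : (0 : ℝ) ≤ |z.re| + |z.im|)] at h
    linarith [abs_nonneg z.im]
  have hsc : 0 < √(c ^ 2 - 1) := sqrt_pos.2 (by rw [sub_pos, one_lt_sq_iff_one_lt_abs]; exact hc)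
  have hint : ‖∫ u in (-1 : ℝ)..1, ((e u : ℝ) : ℂ) / ((√(1 - u ^ 2) : ℂ) * ((u : ℂ) - z))‖ ≤
      √2 * E * (π / √(c ^ 2 - 1)) := by
    rw [← integral_one_div_sqrt_one_sub_sq_mul_abs_sub hc, ← intervalIntegral.integral_const_mul]
    refine norm_integral_le_of_norm_le (by norm_num) (ae_of_all _ fun u hu => ?_)
      ((intervalIntegrable_one_div_sqrt_one_sub_sq_mul_abs_sub hc).const_mul _)
    have hu : |u| ≤ 1 := abs_le.2 ⟨hu.1.le, hu.2⟩
    exact norm_div_sqrt_one_sub_sq_mul_sub_le (he u (abs_le.1 hu))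
      (abs_pos.2 (sub_ne_zero_of_one_lt_abs_of_abs_le_one hc hu)) (hcz u)
  have hz0 : z ≠ 0 := by
    rintro rfl
    norm_num at hz
  calc ‖chebyshevCauchyTransform e z‖
      = √‖z ^ 2 - 1‖ / π *
          ‖∫ u in (-1 : ℝ)..1, ((e u : ℝ) : ℂ) / ((√(1 - u ^ 2) : ℂ) * ((u : ℂ) - z))‖ := by
        rw [chebyshevCauchyTransform, norm_mul, norm_neg, norm_div, norm_mul_cpow_one_half hz0,
          Complex.norm_real, norm_of_nonneg pi_pos.le]
    _ ≤ √(c ^ 2 - 1) / π * (√2 * E * (π / √(c ^ 2 - 1))) := by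
        gcongr
        exact hc2 ▸ norm_sq_sub_one_le hz.le
    _ = √2 * E := by field_simp

lemma sqrt_two_mul_div_four_le_sqrt_sq_add_sq {K G γ ℓ : ℝ} (hK : 0 ≤ K) (hG : 0 ≤ G)
    (hγ : 0 < γ) (hℓ : 1 ≤ ℓ) :
    √2 * (K * G / 4) ≤
      √(((2 * G * K / π) * (1 + π * √2 / (2 * γ * ℓ)) * ℓ) ^ 2 + (K * G / (4 * π)) ^ 2) := by
  have hT : (2 * G * K / π) * (1 + π * √2 / (2 * γ * ℓ)) * ℓ =
      2 * G * K / π * ℓ + √2 * G * K / γ := by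
    field_simp
  have hsqrt2 : √2 * π ≤ 8 := by
    nlinarith [sq_sqrt zero_le_two, sqrt_nonneg 2, pi_lt_d2, pi_pos]
  have hlead : √2 * (K * G / 4) ≤ 2 * G * K / π * ℓ := by
    refine le_trans ?_ (le_mul_of_one_le_right (by positivity) hℓ)
    rw [le_div_iff₀ pi_pos]
    nlinarith [mul_le_mul_of_nonneg_right hsqrt2 (mul_nonneg hK hG)]
  refine le_trans ?_ ((le_abs_self _).trans (abs_le_sqrt (le_add_of_nonneg_right (sq_nonneg _))))
  rw [hT]
  have : 0 ≤ √2 * G * K / γ := by positivity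
  linarith

theorem quadrature_error_complex_CC1alpha_table2_general
    (N : ℕ) (hN : 3 ≤ N)
    (t : ℕ → ℝ) (ht0 : t 0 = -1) (htN : t N = 1)
    (hmono : ∀ k, k < N → t k < t (k + 1))
    (γ : ℝ) (hγ : 0 < γ)
    (hstep : ∀ k, k < N → t (k + 1) - t k ≤ γ / N)
    (f S : ℝ → ℝ) (K₁ α : ℝ) (hα : 0 < α)
    (hf : ∀ k, k < N → ∃ g : ℝ → ℝ,
      (∀ u ∈ Set.Icc (t k) (t (k + 1)),
        HasDerivWithinAt f (g u) (Set.Icc (t k) (t (k + 1))) u) ∧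
      (∀ u ∈ Set.Icc (t k) (t (k + 1)), ∀ v ∈ Set.Icc (t k) (t (k + 1)),
        |g u - g v| ≤ K₁ * |u - v| ^ α))
    (hS : ∀ k, k < N → ∀ u ∈ Set.Icc (t k) (t (k + 1)),
      S u = ((t (k + 1) - u) * f (t k) + (u - t k) * f (t (k + 1))) / (t (k + 1) - t k))
    (z : ℂ) (hz : 1 < |z.re|) :
    ‖(-((z * (1 - 1 / z ^ 2) ^ ((1 : ℂ) / 2)) / (π : ℂ)) *
        ∫ u in (-1 : ℝ)..1,
          ((f u - S u : ℝ) : ℂ) / ((Real.sqrt (1 - u ^ 2) : ℂ) * ((u : ℂ) - z)))‖ ≤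
      Real.sqrt (((2 * γ ^ (1 + α) * K₁ / π) * (1 + π * Real.sqrt 2 / (2 * γ * Real.log N)) * Real.log N) ^ 2 + (K₁ * γ ^ (1 + α) / (4 * π)) ^ 2) / (N : ℝ) ^ (1 + α) := by
  have hN0 : 0 < N := by omega
  have hK₁ : 0 ≤ K₁ := by
    obtain ⟨g, -, hg⟩ := hf 0 hN0
    exact nonneg_of_abs_sub_le_mul_rpow (hmono 0 hN0).ne
      (hg _ (left_mem_Icc.2 (hmono 0 hN0).le) _ (right_mem_Icc.2 (hmono 0 hN0).le))
  have hlog : 1 ≤ Real.log N := by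
    rw [le_log_iff_exp_le (by positivity)]
    have : (3 : ℝ) ≤ N := by exact_mod_cast hN
    linarith [exp_one_lt_d9]
  have hspline (u : ℝ) (hu : u ∈ Icc (-1 : ℝ) 1) : |f u - S u| ≤ K₁ * (γ / N) ^ (1 + α) / 4 :=
    abs_sub_spline_le hN0 hmono hα.le hstep hf hS (by rwa [ht0, htN])
  calc _ ≤ √2 * (K₁ * (γ / N) ^ (1 + α) / 4) := norm_chebyshevCauchyTransform_le hspline hz
    _ = √2 * (K₁ * γ ^ (1 + α) / 4) / (N : ℝ) ^ (1 + α) := by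
        rw [div_rpow hγ.le (Nat.cast_nonneg N)]
        ring
    _ ≤ _ := by
        gcongr
        exact sqrt_two_mul_div_four_le_sqrt_sq_add_sq hK₁ (rpow_nonneg hγ.le _) hγ hlog

theorem quadrature_error_complex_CC1alpha_table2
    (N : ℕ) (hN : 3 ≤ N)
    (t : ℕ → ℝ) (ht0 : t 0 = -1) (htN : t N = 1)
    (hmono : ∀ k, k < N → t k < t (k + 1))
    (γ : ℝ) (hγ : 0 < γ)
    (hstep : ∀ k, k < N → t (k + 1) - t k ≤ γ / N)
    (f S : ℝ → ℝ) (K₁ α : ℝ) (hα : 0 < α) (hα1 : α ≤ 1)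
    (hfc : ContinuousOn f (Set.Icc (-1 : ℝ) 1))
    (hf : ∀ k, k < N → ∃ g : ℝ → ℝ,
      (∀ u ∈ Set.Icc (t k) (t (k + 1)),
        HasDerivWithinAt f (g u) (Set.Icc (t k) (t (k + 1))) u) ∧
      (∀ u ∈ Set.Icc (t k) (t (k + 1)), ∀ v ∈ Set.Icc (t k) (t (k + 1)),
        |g u - g v| ≤ K₁ * |u - v| ^ α))
    (hS : ∀ k, k < N → ∀ u ∈ Set.Icc (t k) (t (k + 1)),
      S u = ((t (k + 1) - u) * f (t k) + (u - t k) * f (t (k + 1))) / (t (k + 1) - t k))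
    (z : ℂ) (hz : 1 < |z.re|) :
    ‖(-((z * (1 - 1 / z ^ 2) ^ ((1 : ℂ) / 2)) / (π : ℂ)) *
        ∫ u in (-1 : ℝ)..1,
          ((f u - S u : ℝ) : ℂ) / ((Real.sqrt (1 - u ^ 2) : ℂ) * ((u : ℂ) - z)))‖ ≤
      Real.sqrt (((2 * γ ^ (1 + α) * K₁ / π) * (1 + π * Real.sqrt 2 / (2 * γ * Real.log N)) * Real.log N) ^ 2 + (K₁ * γ ^ (1 + α) / (4 * π)) ^ 2) / (N : ℝ) ^ (1 + α) :=
  quadrature_error_complex_CC1alpha_table2_general N hN t ht0 htN hmono γ hγ hstep f S K₁ α hα hf hS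
    z hz
end

section
/- Let f belong to CC^{1,α}_Δ[−1,1] with constants K₁ and 0 < α ≤ 1, let h = max_{0≤k≤N−1} h_k, and let r_N = S_N − f be the spline interpolation error. Then r_N satisfies the Lipschitz condition |r_N(t) − r_N(t′)| ≤ K₁·h^α·|t − t′| for all t, t′ ∈ [−1,1]. -/
/-!
On each grid interval the mean value theorem gives a point `ξ` at which `f'` equals the slope of
the chord, so the derivative of the error `S - f` there is `f'(ξ) - f'(x)`, of size at most
`K₁ (t_{k+1} - t_k)^α ≤ K₁ h^α`. The error is therefore `K₁ h^α`-Lipschitz on every grid interval,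
and Lipschitz bounds with a common constant glue across adjacent intervals by the triangle
inequality through the common endpoint.
-/

open Real Set NNReal

noncomputable def linearInterp (f : ℝ → ℝ) (a b x : ℝ) : ℝ :=
  ((b - x) * f a + (x - a) * f b) / (b - a)

theorem hasDerivAt_linearInterp (f : ℝ → ℝ) (a b x : ℝ) :
    HasDerivAt (linearInterp f a b) ((f b - f a) / (b - a)) x := by
  have h := (((hasDerivAt_id x).const_sub b).mul_const (f a)).add
    (((hasDerivAt_id x).sub_const a).mul_const (f b))
  exact (h.div_const (b - a)).congr_deriv (by ring)

theorem nonneg_of_abs_sub_le_mul_rpow_s15 {g : ℝ → ℝ} {K α x y : ℝ} (hxy : x ≠ y)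
    (h : |g x - g y| ≤ K * |x - y| ^ α) : 0 ≤ K := by
  have hpos : 0 < |x - y| ^ α := rpow_pos_of_pos (abs_pos.2 (sub_ne_zero.2 hxy)) α
  exact nonneg_of_mul_nonneg_left ((abs_nonneg _).trans h) hpos

theorem abs_sub_le_mul_rpow_of_holder_Icc {g : ℝ → ℝ} {a b K α d : ℝ}
    (hα : 0 ≤ α) (hK : 0 ≤ K) (hd : b - a ≤ d) (hg : ∀ x ∈ Icc a b, ∀ y ∈ Icc a b, |g x - g y| ≤ K * |x - y| ^ α)
    {x y : ℝ} (hx : x ∈ Icc a b) (hy : y ∈ Icc a b) :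
    |g x - g y| ≤ K * d ^ α := by
  have hxy : |x - y| ≤ d := by
    refine (abs_sub_le_iff.2 ⟨?_, ?_⟩).trans hd <;> linarith [hx.1, hx.2, hy.1, hy.2]
  calc |g x - g y| ≤ K * |x - y| ^ α := hg x hx y hy
    _ ≤ K * d ^ α := by gcongr

theorem lipschitzOnWith_sub_of_eqOn_linearInterp {f g S : ℝ → ℝ} {a b : ℝ} {K : ℝ≥0}
    (hab : a < b) (hS : EqOn S (linearInterp f a b) (Icc a b))
    (hf : ∀ x ∈ Icc a b, HasDerivWithinAt f (g x) (Icc a b) x)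
    (hg : ∀ x ∈ Icc a b, ∀ y ∈ Icc a b, |g x - g y| ≤ K) :
    LipschitzOnWith K (fun x => S x - f x) (Icc a b) := by
  obtain ⟨ξ, hξ, hslope⟩ := exists_hasDerivAt_eq_slope f g hab
    (fun x hx => (hf x hx).continuousWithinAt)
    (fun x hx => (hf x (Ioo_subset_Icc_self hx)).hasDerivAt (Icc_mem_nhds hx.1 hx.2))
  have hderiv : ∀ x ∈ Icc a b,
      HasDerivWithinAt (fun x => S x - f x) (g ξ - g x) (Icc a b) x := fun x hx =>
    ((hslope ▸ (hasDerivAt_linearInterp f a b x).hasDerivWithinAt).congr hS (hS hx)).sub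
      (hf x hx)
  refine (convex_Icc a b).lipschitzOnWith_of_nnnorm_hasDerivWithin_le hderiv fun x hx => ?_
  rw [← NNReal.coe_le_coe, coe_nnnorm, Real.norm_eq_abs]
  exact hg ξ (Ioo_subset_Icc_self hξ) x hx

section Gluing

variable {E : Type*} [PseudoMetricSpace E] {f : ℝ → E} {K : ℝ≥0}

theorem LipschitzOnWith.Icc_trans {a b c : ℝ} (hab : LipschitzOnWith K f (Icc a b))
    (hbc : LipschitzOnWith K f (Icc b c)) : LipschitzOnWith K f (Icc a c) := by
  refine LipschitzOnWith.of_dist_le_mul fun x hx y hy => ?_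
  wlog hxy : x ≤ y generalizing x y
  · rw [dist_comm, dist_comm x]
    exact this y hy x hx (le_of_not_ge hxy)
  rcases le_total y b with hyb | hby
  · exact hab.dist_le_mul x ⟨hx.1, hxy.trans hyb⟩ y ⟨hx.1.trans hxy, hyb⟩
  rcases le_total b x with hbx | hxb
  · exact hbc.dist_le_mul x ⟨hbx, hxy.trans hy.2⟩ y ⟨hbx.trans hxy, hy.2⟩
  calc dist (f x) (f y) ≤ dist (f x) (f b) + dist (f b) (f y) := dist_triangle _ _ _
    _ ≤ K * dist x b + K * dist b y :=
      add_le_add (hab.dist_le_mul x ⟨hx.1, hxb⟩ b ⟨hx.1.trans hxb, le_rfl⟩)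
        (hbc.dist_le_mul b ⟨le_rfl, hby.trans hy.2⟩ y ⟨hby, hy.2⟩)
    _ = K * dist x y := by
      rw [← mul_add, dist_add_dist_of_mem_segment (segment_eq_Icc hxy ▸ ⟨hxb, hby⟩)]

theorem LipschitzOnWith.Icc_of_forall_Icc_succ {t : ℕ → ℝ} {n : ℕ}
    (h : ∀ k < n, LipschitzOnWith K f (Icc (t k) (t (k + 1)))) :
    LipschitzOnWith K f (Icc (t 0) (t n)) := by
  induction n with
  | zero =>
    refine LipschitzOnWith.of_dist_le_mul fun x hx y hy => ?_
    rw [Icc_self, mem_singleton_iff] at hx hy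
    simp [hx, hy]
  | succ n ih =>
    exact (ih fun k hk => h k (by omega)).Icc_trans (h n n.lt_succ_self)

end Gluing

theorem spline_remainder_lipschitz_CC1alpha
    (N : ℕ) (hN : 1 ≤ N)
    (t : ℕ → ℝ) (ht0 : t 0 = -1) (htN : t N = 1)
    (hmono : ∀ k, k < N → t k < t (k + 1))
    (f S : ℝ → ℝ) (K₁ α : ℝ) (hα : 0 < α)
    (hf : ∀ k, k < N → ∃ g : ℝ → ℝ,
      (∀ u ∈ Set.Icc (t k) (t (k + 1)),
        HasDerivWithinAt f (g u) (Set.Icc (t k) (t (k + 1))) u) ∧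
      (∀ u ∈ Set.Icc (t k) (t (k + 1)), ∀ v ∈ Set.Icc (t k) (t (k + 1)),
        |g u - g v| ≤ K₁ * |u - v| ^ α))
    (hS : ∀ k, k < N → ∀ u ∈ Set.Icc (t k) (t (k + 1)),
      S u = ((t (k + 1) - u) * f (t k) + (u - t k) * f (t (k + 1))) / (t (k + 1) - t k))
    (h : ℝ)
    (hmax : h = (Finset.range N).sup' (Finset.nonempty_range_iff.mpr (by omega))
      (fun k => t (k + 1) - t k))
    (u : ℝ) (hu : u ∈ Set.Icc (-1 : ℝ) 1) (v : ℝ) (hv : v ∈ Set.Icc (-1 : ℝ) 1) :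
    |(S u - f u) - (S v - f v)| ≤ K₁ * h ^ α * |u - v| := by
  have hstep : ∀ k < N, t (k + 1) - t k ≤ h := fun k hk =>
    hmax ▸ Finset.le_sup' (fun k => t (k + 1) - t k) (Finset.mem_range.2 hk)
  have h0 : t 0 < t 1 := hmono 0 hN
  have hK₁ : 0 ≤ K₁ := by
    obtain ⟨g, -, hg⟩ := hf 0 hN
    exact nonneg_of_abs_sub_le_mul_rpow_s15 h0.ne
      (hg _ (left_mem_Icc.2 h0.le) _ (right_mem_Icc.2 h0.le))
  have hC : 0 ≤ K₁ * h ^ α :=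
    mul_nonneg hK₁ (rpow_nonneg ((sub_pos.2 h0).le.trans (hstep 0 hN)) α)
  have hlip : LipschitzOnWith ⟨K₁ * h ^ α, hC⟩ (fun x => S x - f x) (Icc (t 0) (t N)) := by
    refine LipschitzOnWith.Icc_of_forall_Icc_succ fun k hk => ?_
    obtain ⟨g, hfg, hg⟩ := hf k hk
    exact lipschitzOnWith_sub_of_eqOn_linearInterp (hmono k hk) (hS k hk) hfg
      fun x hx y hy => abs_sub_le_mul_rpow_of_holder_Icc hα.le hK₁ (hstep k hk) hg hx hy
  rw [ht0, htN] at hlip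
  have hdist := hlip.dist_le_mul u hu v hv
  rwa [Real.dist_eq, Real.dist_eq] at hdist
end
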